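/- arXiv:2601.03008 — 2 statements merged into one kernel-verified Lean document; each statement's English description precedes it below -/
import Mathlib

section
/- (Proposition 2(ii), finite attainment of small gap.) Let c₀ ∈ (0,1) and ε ∈ (0, c₀²]. Define ϖ := (L + 2L_f̃)√p + ‖∇f̃(E/√m)‖_F, ϖ_lin := 4L_f̃ p + 2√p·‖∇f̃(E/√m)‖_F + (5/2)Lp, η(c₀,p) := 2(1 − 1/p)√(p − c₀²) + 2√(1 − c₀²), ρ̂ := max{2ϖ_lin/η(c₀,p), 2ϖ_lin/ε}. Let V⁰ ∈ S be such that all entries of u₁(V⁰) are nonzero, set μ := min over j of |u₁(V⁰)_j| and ρ̄ := (Lp + ϖ)/(μ c₀), and assume ρ > max{ρ̂, ρ̄} and L ≥ L_f̃. Let {V^l}_{l≥0} be generated by iterating the algorithmic update with this fixed ρ (assume every column of each G(V^l) is nonzero). Then there exists an index l̄ with 1 ≤ l̄ ≤ ⌈(2c₀² − ε)/η(c₀,p)⌉ + 1 such that for all l ≥ l̄, ‖V^l‖_F² − ‖V^l‖² = p − ‖V^l‖² ≤ ε. -/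
open Matrix

noncomputable section

/-- Squared Frobenius norm `‖A‖_F²`. -/
def frobSq {a b : ℕ} (A : Matrix (Fin a) (Fin b) ℝ) : ℝ := ∑ i, ∑ j, A i j ^ 2

/-- Frobenius norm `‖A‖_F`. -/
def frobNorm {a b : ℕ} (A : Matrix (Fin a) (Fin b) ℝ) : ℝ := Real.sqrt (frobSq A)

/-- Trace (Frobenius) inner product `⟨A,B⟩ = tr(AᵀB)`. -/
def frobInner {a b : ℕ} (A B : Matrix (Fin a) (Fin b) ℝ) : ℝ := ∑ i, ∑ j, A i j * B i j

/-- Squared spectral norm: `sup {‖Vx‖₂² : ‖x‖₂ = 1}`. -/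
def specSq {a b : ℕ} (V : Matrix (Fin a) (Fin b) ℝ) : ℝ :=
  sSup {c | ∃ x : Fin b → ℝ, (∑ j, x j ^ 2) = 1 ∧ c = ∑ i, (∑ j, V i j * x j) ^ 2}

/-- Spectral norm (largest singular value). -/
def specNorm {a b : ℕ} (V : Matrix (Fin a) (Fin b) ℝ) : ℝ := Real.sqrt (specSq V)

/-- Membership in `S`: all columns have unit Euclidean norm. -/
def unitCols {a b : ℕ} (V : Matrix (Fin a) (Fin b) ℝ) : Prop :=
  ∀ j, ∑ i, V i j ^ 2 = 1

/-- Column-wise normalization to unit Euclidean norm (projection onto `S`). -/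
def normalizeCols {a b : ℕ} (G : Matrix (Fin a) (Fin b) ℝ) : Matrix (Fin a) (Fin b) ℝ :=
  Matrix.of fun i j => G i j / Real.sqrt (∑ i', G i' j ^ 2)

/-- `u` is a unit eigenvector of `VᵀV` associated with its largest eigenvalue `lam`
(the Rayleigh-quotient bound states that `lam` is the largest eigenvalue). -/
def isTopEigen {a b : ℕ} (V : Matrix (Fin a) (Fin b) ℝ) (lam : ℝ) (u : Fin b → ℝ) : Prop :=
  (∑ j, u j ^ 2) = 1 ∧ (Vᵀ * V) *ᵥ u = lam • u ∧
    ∀ x : Fin b → ℝ, x ⬝ᵥ ((Vᵀ * V) *ᵥ x) ≤ lam * (x ⬝ᵥ x)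

/-- `Γ(V) = −2 V u uᵀ` where `u = u₁(V)`. -/
def GammaOf {a b : ℕ} (V : Matrix (Fin a) (Fin b) ℝ) (u : Fin b → ℝ) :
    Matrix (Fin a) (Fin b) ℝ := (-2 : ℝ) • (V * vecMulVec u u)

/-- The update direction `G(V) = (2ρ+L)⁻¹ (L V − ∇f̃(V) − ρ Γ(V))`. -/
def Gmap {a b : ℕ} (gradf : Matrix (Fin a) (Fin b) ℝ → Matrix (Fin a) (Fin b) ℝ)
    (ρ L : ℝ) (V : Matrix (Fin a) (Fin b) ℝ) (u : Fin b → ℝ) : Matrix (Fin a) (Fin b) ℝ :=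
  (2 * ρ + L)⁻¹ • (L • V - gradf V - ρ • GammaOf V u)

/-- Penalized objective `Φ_ρ(V) = f̃(V) + ρ(‖V‖_F² − ‖V‖²)`. -/
def Phi {a b : ℕ} (f : Matrix (Fin a) (Fin b) ℝ → ℝ) (ρ : ℝ)
    (V : Matrix (Fin a) (Fin b) ℝ) : ℝ := f V + ρ * (frobSq V - specSq V)

/-- Stationarity residual `𝒢_ρ(V,Γ) = inf_t ‖∇f̃(V) + 2ρV + ρΓ + V·Diag(t)‖_F`. -/
def Gres {a b : ℕ} (gradf : Matrix (Fin a) (Fin b) ℝ → Matrix (Fin a) (Fin b) ℝ) (ρ : ℝ)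
    (V Γ : Matrix (Fin a) (Fin b) ℝ) : ℝ :=
  ⨅ t : Fin b → ℝ, frobNorm (gradf V + (2 * ρ) • V + ρ • Γ + V * Matrix.diagonal t)

/-- The all-ones matrix `E` scaled by `1/√m`. -/
def Escaled (a b : ℕ) : Matrix (Fin a) (Fin b) ℝ :=
  (Real.sqrt a)⁻¹ • Matrix.of fun _ _ => (1 : ℝ)

attribute [local instance] Matrix.frobeniusNormedAddCommGroup Matrix.frobeniusNormedSpace

/-- The continuous linear functional `W ↦ ⟨A, W⟩` (Frobenius pairing); used to state that
`∇f̃` is the gradient of `f̃` with respect to the trace inner product. -/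
def frobCLM {a b : ℕ} (A : Matrix (Fin a) (Fin b) ℝ) :
    Matrix (Fin a) (Fin b) ℝ →L[ℝ] ℝ :=
  LinearMap.toContinuousLinearMap
    { toFun := fun W => frobInner A W
      map_add' := fun W W' => by
        simp [frobInner, Matrix.add_apply, mul_add, Finset.sum_add_distrib]
      map_smul' := fun c W => by
        simp [frobInner, Matrix.smul_apply, smul_eq_mul, Finset.mul_sum, mul_left_comm] }

/-!
Write `R = G(V) - V u uᵀ`. Since `(2ρ + L) R = L (V - V u uᵀ) - ∇f̃(V)`, the Lipschitz bound on
`∇f̃` gives `‖R‖_F ≤ ϖ / (2ρ)`. With the unit vector `w = V u / √λ`, column `j` of `G(V)` is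
`(u_j √λ) w + R_j`, so after normalization its squared sine to `w` is at most `‖R_j‖² / (u_j² λ)`;
summing over the columns and using the Rayleigh bound `λ⁺ ≥ ‖V⁺ᵀ w‖²` gives
`p - λ⁺ ≤ ‖R‖_F² / min_j u_j² λ`. At the first step `u_j² λ ≥ μ²` and `ρ > ρ̄` pushes the gap
below `1/4`; from then on `u_j² λ ≥ 1 - (p - λ) ≥ 3/4`, and `ρ > 2 ϖ_lin / ε` keeps every later
gap below `ε`. So `l̄ = 2` works.
-/

section Vectors

variable {ι : Type*} [Fintype ι]

lemma sum_sq_eq_dotProduct_self (x : ι → ℝ) : ∑ i, x i ^ 2 = x ⬝ᵥ x := by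
  simp only [dotProduct, sq]

lemma dotProduct_self_nonneg (x : ι → ℝ) : 0 ≤ x ⬝ᵥ x := by
  rw [← sum_sq_eq_dotProduct_self]; positivity

lemma dotProduct_self_pos {x : ι → ℝ} (hx : x ≠ 0) : 0 < x ⬝ᵥ x :=
  (dotProduct_self_nonneg x).lt_of_ne' (mt dotProduct_self_eq_zero.1 hx)

lemma dotProduct_sq_le (x y : ι → ℝ) : (x ⬝ᵥ y) ^ 2 ≤ (x ⬝ᵥ x) * (y ⬝ᵥ y) := by
  have h := Finset.sum_mul_sq_le_sq_mul_sq Finset.univ x y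
  rwa [sum_sq_eq_dotProduct_self, sum_sq_eq_dotProduct_self] at h

end Vectors

section Frobenius

variable {m p : ℕ}

lemma frobSq_eq_sum_col (A : Matrix (Fin m) (Fin p) ℝ) :
    frobSq A = ∑ j, A.col j ⬝ᵥ A.col j := by
  rw [frobSq, Finset.sum_comm]
  simp only [← sum_sq_eq_dotProduct_self, col_apply]

lemma col_dotProduct_self_le_frobSq (A : Matrix (Fin m) (Fin p) ℝ) (j : Fin p) :
    A.col j ⬝ᵥ A.col j ≤ frobSq A := by
  rw [frobSq_eq_sum_col]
  exact Finset.single_le_sum (fun k _ => dotProduct_self_nonneg (A.col k)) (Finset.mem_univ j)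

lemma frobSq_eq_norm_sq (A : Matrix (Fin m) (Fin p) ℝ) : frobSq A = ‖A‖ ^ 2 := by
  rw [Matrix.frobenius_norm_def, ← Real.sqrt_eq_rpow, Real.sq_sqrt (by positivity), frobSq]
  simp only [Real.norm_eq_abs, sq_abs, Real.rpow_two]

lemma frobSq_nonneg (A : Matrix (Fin m) (Fin p) ℝ) : 0 ≤ frobSq A :=
  frobSq_eq_norm_sq A ▸ sq_nonneg _

lemma frobNorm_eq_norm (A : Matrix (Fin m) (Fin p) ℝ) : frobNorm A = ‖A‖ := by
  rw [frobNorm, frobSq_eq_norm_sq, Real.sqrt_sq (norm_nonneg A)]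

lemma unitCols_iff {V : Matrix (Fin m) (Fin p) ℝ} :
    unitCols V ↔ ∀ j, V.col j ⬝ᵥ V.col j = 1 := by
  simp only [unitCols, ← sum_sq_eq_dotProduct_self, col_apply]

lemma frobSq_of_unitCols {V : Matrix (Fin m) (Fin p) ℝ} (hV : unitCols V) : frobSq V = p := by
  simp [frobSq_eq_sum_col, unitCols_iff.1 hV]

lemma col_normalizeCols (G : Matrix (Fin m) (Fin p) ℝ) (j : Fin p) :
    (normalizeCols G).col j = (√(G.col j ⬝ᵥ G.col j))⁻¹ • G.col j := by
  ext i
  simp [normalizeCols, ← sum_sq_eq_dotProduct_self, div_eq_inv_mul]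

lemma unitCols_normalizeCols {G : Matrix (Fin m) (Fin p) ℝ} (hG : ∀ j, ∃ i, G i j ≠ 0) :
    unitCols (normalizeCols G) := by
  refine unitCols_iff.2 fun j => ?_
  have hpos : 0 < G.col j ⬝ᵥ G.col j := by
    obtain ⟨i, hi⟩ := hG j
    exact dotProduct_self_pos fun h => hi (congrFun h i)
  rw [col_normalizeCols, dotProduct_smul, smul_dotProduct, smul_eq_mul, smul_eq_mul,
    ← mul_assoc, ← mul_inv, Real.mul_self_sqrt hpos.le, inv_mul_cancel₀ hpos.ne']

lemma unitCols_of_eq_normalizeCols {Vseq Gseq : ℕ → Matrix (Fin m) (Fin p) ℝ}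
    (h0 : unitCols (Vseq 0)) (hG : ∀ l j, ∃ i, Gseq l i j ≠ 0)
    (hstep : ∀ l, Vseq (l + 1) = normalizeCols (Gseq l)) : ∀ l, unitCols (Vseq l)
  | 0 => h0
  | l + 1 => hstep l ▸ unitCols_normalizeCols (hG l)

lemma frobSq_Escaled (hm : 0 < m) : frobSq (Escaled m p) = p := by
  have hm' : (0 : ℝ) < m := Nat.cast_pos.2 hm
  simp [frobSq, Escaled, inv_pow, Real.sq_sqrt hm'.le]
  field_simp

end Frobenius

section TopEigen

variable {m p : ℕ} {V : Matrix (Fin m) (Fin p) ℝ} {lam : ℝ} {u : Fin p → ℝ}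

lemma isTopEigen.mulVec_dotProduct_le (ht : isTopEigen V lam u) (x : Fin p → ℝ) :
    (V *ᵥ x) ⬝ᵥ (V *ᵥ x) ≤ lam * (x ⬝ᵥ x) := by
  have h := ht.2.2 x
  rwa [← mulVec_mulVec, dotProduct_mulVec, vecMul_transpose] at h

lemma isTopEigen.col_dotProduct_mulVec (ht : isTopEigen V lam u) (k : Fin p) :
    V.col k ⬝ᵥ (V *ᵥ u) = lam * u k := by
  have h := congrFun ht.2.1 k
  rwa [← mulVec_mulVec] at h

lemma isTopEigen.mulVec_dotProduct_self (ht : isTopEigen V lam u) :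
    (V *ᵥ u) ⬝ᵥ (V *ᵥ u) = lam := by
  calc (V *ᵥ u) ⬝ᵥ (V *ᵥ u) = u ⬝ᵥ (Vᵀ *ᵥ (V *ᵥ u)) := by
        rw [dotProduct_mulVec u Vᵀ, vecMul_transpose]
    _ = lam := by
        rw [mulVec_mulVec, ht.2.1, dotProduct_smul, ← sum_sq_eq_dotProduct_self, ht.1,
          smul_eq_mul, mul_one]

lemma isTopEigen.nonneg (ht : isTopEigen V lam u) : 0 ≤ lam :=
  ht.mulVec_dotProduct_self ▸ dotProduct_self_nonneg _

lemma isTopEigen.specSq_eq (ht : isTopEigen V lam u) : specSq V = lam := by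
  have hS (x : Fin p → ℝ) : ∑ i, (∑ j, V i j * x j) ^ 2 = (V *ᵥ x) ⬝ᵥ (V *ᵥ x) :=
    sum_sq_eq_dotProduct_self (V *ᵥ x)
  unfold specSq
  simp_rw [hS, sum_sq_eq_dotProduct_self]
  have hmem : lam ∈ {c | ∃ x : Fin p → ℝ, x ⬝ᵥ x = 1 ∧ c = (V *ᵥ x) ⬝ᵥ (V *ᵥ x)} :=
    ⟨u, by rw [← sum_sq_eq_dotProduct_self, ht.1], ht.mulVec_dotProduct_self.symm⟩
  have hub : ∀ c ∈ {c | ∃ x : Fin p → ℝ, x ⬝ᵥ x = 1 ∧ c = (V *ᵥ x) ⬝ᵥ (V *ᵥ x)}, c ≤ lam := by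
    rintro c ⟨x, hx, rfl⟩
    simpa [hx] using ht.mulVec_dotProduct_le x
  exact le_antisymm (csSup_le ⟨lam, hmem⟩ hub) (le_csSup ⟨lam, hub⟩ hmem)

lemma isTopEigen.one_le (hp : 0 < p) (hV : unitCols V) (ht : isTopEigen V lam u) : 1 ≤ lam := by
  have h := ht.mulVec_dotProduct_le (Pi.single ⟨0, hp⟩ 1)
  simpa [mulVec_single_one, unitCols_iff.1 hV] using h

lemma col_sub_mul_vecMulVec (A V : Matrix (Fin m) (Fin p) ℝ) (u : Fin p → ℝ) (k : Fin p) :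
    (A - V * vecMulVec u u).col k = A.col k - u k • (V *ᵥ u) := by
  ext i
  simp [mul_vecMulVec, vecMulVec_apply, mul_comm]

lemma isTopEigen.col_sub_dotProduct_self (hV : unitCols V) (ht : isTopEigen V lam u) (k : Fin p) :
    (V - V * vecMulVec u u).col k ⬝ᵥ (V - V * vecMulVec u u).col k = 1 - u k ^ 2 * lam := by
  simp only [col_sub_mul_vecMulVec, sub_dotProduct, dotProduct_sub, dotProduct_smul,
    smul_dotProduct, smul_eq_mul, unitCols_iff.1 hV k, ht.col_dotProduct_mulVec,
    dotProduct_comm (V *ᵥ u) (V.col k), ht.mulVec_dotProduct_self]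
  ring

lemma isTopEigen.sq_mul_le_one (hV : unitCols V) (ht : isTopEigen V lam u) (k : Fin p) :
    u k ^ 2 * lam ≤ 1 := by
  have h := ht.col_sub_dotProduct_self hV k
  linarith [dotProduct_self_nonneg ((V - V * vecMulVec u u).col k)]

lemma isTopEigen.sum_one_sub_sq_mul (ht : isTopEigen V lam u) :
    ∑ k, (1 - u k ^ 2 * lam) = p - lam := by
  simp [Finset.sum_sub_distrib, ← Finset.sum_mul, ht.1]

lemma isTopEigen.frobSq_sub_mul_vecMulVec (hV : unitCols V) (ht : isTopEigen V lam u) :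
    frobSq (V - V * vecMulVec u u) = p - lam := by
  simp only [frobSq_eq_sum_col, ht.col_sub_dotProduct_self hV, ht.sum_one_sub_sq_mul]

lemma isTopEigen.one_sub_gap_le (hV : unitCols V) (ht : isTopEigen V lam u) (j : Fin p) :
    1 - (p - lam) ≤ u j ^ 2 * lam := by
  have h : 1 - u j ^ 2 * lam ≤ ∑ k, (1 - u k ^ 2 * lam) :=
    Finset.single_le_sum (fun k _ => sub_nonneg.2 (ht.sq_mul_le_one hV k)) (Finset.mem_univ j)
  linarith [ht.sum_one_sub_sq_mul]

lemma isTopEigen.vecMul_dotProduct_self_le (ht : isTopEigen V lam u) {w : Fin m → ℝ}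
    (hw : w ⬝ᵥ w = 1) : (w ᵥ* V) ⬝ᵥ (w ᵥ* V) ≤ lam := by
  set y := w ᵥ* V
  have hCS : (y ⬝ᵥ y) ^ 2 ≤ lam * (y ⬝ᵥ y) := by
    calc (y ⬝ᵥ y) ^ 2 = (w ⬝ᵥ (V *ᵥ y)) ^ 2 := by rw [dotProduct_mulVec]
      _ ≤ (w ⬝ᵥ w) * ((V *ᵥ y) ⬝ᵥ (V *ᵥ y)) := dotProduct_sq_le _ _
      _ ≤ lam * (y ⬝ᵥ y) := by rw [hw, one_mul]; exact ht.mulVec_dotProduct_le y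
  rcases (dotProduct_self_nonneg y).eq_or_lt with h0 | h0
  · rw [← h0]; exact ht.nonneg
  · nlinarith

end TopEigen

/-- For a unit vector `w`, `‖α w + r‖² = α² + 2 α t + d` with `t = ⟨w, r⟩` and `d = ‖r‖²`; the
inequality is `0 ≤ (α t + d)²` in disguise. -/
lemma one_sub_sq_div_le {α t d : ℝ} (ht : t ^ 2 ≤ d) (hd : d < α ^ 2) :
    0 < α ^ 2 + 2 * α * t + d ∧ 1 - (α + t) ^ 2 / (α ^ 2 + 2 * α * t + d) ≤ d / α ^ 2 := by
  have hα : 0 < α ^ 2 := (sq_nonneg t).trans_lt (ht.trans_lt hd)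
  have hN : 0 < α ^ 2 + 2 * α * t + d := by nlinarith [sq_nonneg (α + t)]
  refine ⟨hN, ?_⟩
  rw [one_sub_div hN.ne', div_le_div_iff₀ hN hα]
  nlinarith [sq_nonneg (α * t + d)]

lemma one_sub_dotProduct_normalize_sq_le {ι : Type*} [Fintype ι] {w r : ι → ℝ} {α : ℝ}
    (hw : w ⬝ᵥ w = 1) (hr : r ⬝ᵥ r < α ^ 2) :
    1 - (w ⬝ᵥ ((√((α • w + r) ⬝ᵥ (α • w + r)))⁻¹ • (α • w + r))) ^ 2 ≤ (r ⬝ᵥ r) / α ^ 2 := by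
  have hN : (α • w + r) ⬝ᵥ (α • w + r) = α ^ 2 + 2 * α * (w ⬝ᵥ r) + r ⬝ᵥ r := by
    simp only [add_dotProduct, dotProduct_add, smul_dotProduct, dotProduct_smul, smul_eq_mul, hw,
      dotProduct_comm r w]
    ring
  have hwg : w ⬝ᵥ (α • w + r) = α + w ⬝ᵥ r := by
    simp only [dotProduct_add, dotProduct_smul, smul_eq_mul, hw, mul_one]
  have ht : (w ⬝ᵥ r) ^ 2 ≤ r ⬝ᵥ r := by simpa [hw] using dotProduct_sq_le w r
  obtain ⟨hpos, hle⟩ := one_sub_sq_div_le ht hr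
  rwa [dotProduct_smul, smul_eq_mul, mul_pow, inv_pow, Real.sq_sqrt (hN ▸ hpos.le), hwg, hN,
    ← div_eq_inv_mul]

section Step

variable {m p : ℕ} {V G : Matrix (Fin m) (Fin p) ℝ} {lam lam' : ℝ} {u u' : Fin p → ℝ}

theorem isTopEigen.card_sub_le_of_normalizeCols (hp : 0 < p) (ht : isTopEigen V lam u)
    (ht' : isTopEigen (normalizeCols G) lam' u') {A : ℝ} (hA : 0 < A)
    (hAu : ∀ j, A ≤ u j ^ 2 * lam) (hR : frobSq (G - V * vecMulVec u u) < A) :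
    p - lam' ≤ frobSq (G - V * vecMulVec u u) / A := by
  set R := G - V * vecMulVec u u
  have hlam : 0 < lam := by nlinarith [hAu ⟨0, hp⟩, sq_nonneg (u ⟨0, hp⟩)]
  set w := (√lam)⁻¹ • (V *ᵥ u)
  have hw : w ⬝ᵥ w = 1 := by
    rw [smul_dotProduct, dotProduct_smul, ht.mulVec_dotProduct_self, smul_eq_mul, smul_eq_mul,
      ← mul_assoc, ← mul_inv, Real.mul_self_sqrt hlam.le, inv_mul_cancel₀ hlam.ne']
  have hcol (j : Fin p) : G.col j = (u j * √lam) • w + R.col j := by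
    rw [col_sub_mul_vecMulVec, smul_smul, mul_assoc, mul_inv_cancel₀ (Real.sqrt_pos.2 hlam).ne',
      mul_one, add_sub_cancel]
  have hj (j : Fin p) : 1 - (w ⬝ᵥ (normalizeCols G).col j) ^ 2 ≤ R.col j ⬝ᵥ R.col j / A := by
    have hRj := (col_dotProduct_self_le_frobSq R j).trans_lt hR
    have hAj : A ≤ (u j * √lam) ^ 2 := by rw [mul_pow, Real.sq_sqrt hlam.le]; exact hAu j
    rw [col_normalizeCols, hcol j]
    exact (one_sub_dotProduct_normalize_sq_le hw (hRj.trans_le hAj)).trans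
      (div_le_div_of_nonneg_left (dotProduct_self_nonneg _) hA hAj)
  have hray : ∑ j, (w ⬝ᵥ (normalizeCols G).col j) ^ 2 ≤ lam' := by
    have h := ht'.vecMul_dotProduct_self_le hw
    rwa [← sum_sq_eq_dotProduct_self] at h
  calc (p : ℝ) - lam' ≤ ∑ j, (1 - (w ⬝ᵥ (normalizeCols G).col j) ^ 2) := by
        rw [Finset.sum_sub_distrib]
        simp only [Finset.sum_const, Finset.card_univ, Fintype.card_fin, nsmul_eq_mul, mul_one]
        linarith
    _ ≤ ∑ j, R.col j ⬝ᵥ R.col j / A := Finset.sum_le_sum fun j _ => hj j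
    _ = frobSq R / A := by rw [frobSq_eq_sum_col, Finset.sum_div]

lemma isTopEigen.card_sub_le_of_le_abs (hp : 0 < p) (hV : unitCols V) (ht : isTopEigen V lam u)
    (ht' : isTopEigen (normalizeCols G) lam' u') {μ : ℝ} (hμ : 0 < μ) (hu : ∀ j, μ ≤ |u j|)
    (hR : frobSq (G - V * vecMulVec u u) < μ ^ 2) :
    p - lam' ≤ frobSq (G - V * vecMulVec u u) / μ ^ 2 := by
  refine ht.card_sub_le_of_normalizeCols hp ht' (by positivity) (fun j => ?_) hR
  have hμu : μ ^ 2 ≤ u j ^ 2 := by simpa only [sq_abs] using pow_le_pow_left₀ hμ.le (hu j) 2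
  nlinarith [ht.one_le hp hV]

lemma isTopEigen.card_sub_le_of_frobSq_lt (hp : 0 < p) (hV : unitCols V)
    (ht : isTopEigen V lam u) (ht' : isTopEigen (normalizeCols G) lam' u')
    (hR : frobSq (G - V * vecMulVec u u) < 1 - (p - lam)) :
    p - lam' ≤ frobSq (G - V * vecMulVec u u) / (1 - (p - lam)) :=
  ht.card_sub_le_of_normalizeCols hp ht' ((frobSq_nonneg _).trans_lt hR) (ht.one_sub_gap_le hV) hR

theorem card_sub_le_of_frobSq_sub_le (hp : 0 < p) {Vseq Gseq : ℕ → Matrix (Fin m) (Fin p) ℝ}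
    {useq : ℕ → Fin p → ℝ} {lamseq : ℕ → ℝ} (hU : ∀ l, unitCols (Vseq l))
    (htop : ∀ l, isTopEigen (Vseq l) (lamseq l) (useq l))
    (hstep : ∀ l, Vseq (l + 1) = normalizeCols (Gseq l)) {B μ : ℝ}
    (hR : ∀ l, frobSq (Gseq l - Vseq l * vecMulVec (useq l) (useq l)) ≤ B ^ 2)
    (hμ : 0 < μ) (hu : ∀ j, μ ≤ |useq 0 j|) (hB0 : 0 ≤ B) (hBμ : B < μ / 2) (hB : B ≤ 1 / 4) :
    ∀ l ≥ 2, p - lamseq l ≤ 4 * B ^ 2 / 3 := by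
  have ht' (l : ℕ) : isTopEigen (normalizeCols (Gseq l)) (lamseq (l + 1)) (useq (l + 1)) :=
    hstep l ▸ htop (l + 1)
  have hsucc (n : ℕ) (hn : p - lamseq n ≤ 1 / 4) : p - lamseq (n + 1) ≤ 4 * B ^ 2 / 3 := by
    have hlt : frobSq (Gseq n - Vseq n * vecMulVec (useq n) (useq n)) < 1 - (p - lamseq n) := by
      nlinarith [hR n]
    refine ((htop n).card_sub_le_of_frobSq_lt hp (hU n) (ht' n) hlt).trans ?_
    rw [div_le_div_iff₀ (by linarith) (by norm_num)]
    nlinarith [hR n, frobSq_nonneg (Gseq n - Vseq n * vecMulVec (useq n) (useq n))]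
  have hone : p - lamseq 1 ≤ 1 / 4 := by
    have hlt : frobSq (Gseq 0 - Vseq 0 * vecMulVec (useq 0) (useq 0)) < μ ^ 2 := by
      nlinarith [hR 0]
    refine ((htop 0).card_sub_le_of_le_abs hp (hU 0) (ht' 0) hμ hu hlt).trans ?_
    rw [div_le_iff₀ (by positivity)]
    nlinarith [hR 0]
  have hquarter : ∀ l ≥ 1, p - lamseq l ≤ 1 / 4 :=
    Nat.le_induction hone fun n _ ih => (hsucc n ih).trans (by nlinarith)
  intro l hl
  obtain ⟨n, rfl⟩ : ∃ n, l = n + 1 := ⟨l - 1, by omega⟩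
  exact hsucc n (hquarter n (by omega))

end Step

section Perturbation

variable {m p : ℕ} (gradf : Matrix (Fin m) (Fin p) ℝ → Matrix (Fin m) (Fin p) ℝ) {ρ L Lf : ℝ}
  {V : Matrix (Fin m) (Fin p) ℝ} {lam : ℝ} {u : Fin p → ℝ}

lemma smul_Gmap_sub_mul_vecMulVec (h : 2 * ρ + L ≠ 0) :
    (2 * ρ + L) • (Gmap gradf ρ L V u - V * vecMulVec u u)
      = L • (V - V * vecMulVec u u) - gradf V := by
  rw [Gmap, smul_sub, smul_smul, mul_inv_cancel₀ h, one_smul, GammaOf]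
  module

lemma norm_of_unitCols (hV : unitCols V) : ‖V‖ = √p := by
  rw [← frobNorm_eq_norm, frobNorm, frobSq_of_unitCols hV]

lemma norm_Escaled (hm : 0 < m) : ‖Escaled m p‖ = √p := by
  rw [← frobNorm_eq_norm, frobNorm, frobSq_Escaled hm]

lemma norm_gradf_le (hm : 0 < m) (hLf : 0 ≤ Lf)
    (hlip : ∀ W W', ‖gradf W - gradf W'‖ ≤ Lf * ‖W - W'‖) (hV : unitCols V) :
    ‖gradf V‖ ≤ ‖gradf (Escaled m p)‖ + 2 * Lf * √p := by
  have hdist : ‖V - Escaled m p‖ ≤ 2 * √p := by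
    linarith [norm_sub_le V (Escaled m p), norm_of_unitCols hV, norm_Escaled (p := p) hm]
  calc ‖gradf V‖ ≤ ‖gradf (Escaled m p)‖ + ‖gradf V - gradf (Escaled m p)‖ :=
        norm_le_insert' _ _
    _ ≤ ‖gradf (Escaled m p)‖ + Lf * (2 * √p) := by
        gcongr
        exact (hlip _ _).trans (mul_le_mul_of_nonneg_left hdist hLf)
    _ = ‖gradf (Escaled m p)‖ + 2 * Lf * √p := by ring

lemma frobSq_Gmap_sub_le (hm : 0 < m) (hρ : 0 < ρ) (hLf : 0 ≤ Lf) (hL : Lf ≤ L)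
    (hlip : ∀ W W', frobNorm (gradf W - gradf W') ≤ Lf * frobNorm (W - W')) (hV : unitCols V)
    (ht : isTopEigen V lam u) :
    frobSq (Gmap gradf ρ L V u - V * vecMulVec u u)
      ≤ (((L + 2 * Lf) * √p + frobNorm (gradf (Escaled m p))) / (2 * ρ)) ^ 2 := by
  simp only [frobNorm_eq_norm] at hlip ⊢
  have hL0 : 0 ≤ L := hLf.trans hL
  have hVP : ‖V - V * vecMulVec u u‖ ≤ √p := by
    rw [← frobNorm_eq_norm, frobNorm, ht.frobSq_sub_mul_vecMulVec hV]
    exact Real.sqrt_le_sqrt (by linarith [ht.nonneg])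
  have hscaled : (2 * ρ + L) * ‖Gmap gradf ρ L V u - V * vecMulVec u u‖
      ≤ (L + 2 * Lf) * √p + ‖gradf (Escaled m p)‖ :=
    calc (2 * ρ + L) * ‖Gmap gradf ρ L V u - V * vecMulVec u u‖
        = ‖L • (V - V * vecMulVec u u) - gradf V‖ := by
          rw [← smul_Gmap_sub_mul_vecMulVec gradf (by positivity), norm_smul,
            Real.norm_of_nonneg (by positivity)]
      _ ≤ L * ‖V - V * vecMulVec u u‖ + ‖gradf V‖ := by
          simpa only [norm_smul, Real.norm_of_nonneg hL0] using
            norm_sub_le (L • (V - V * vecMulVec u u)) (gradf V)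
      _ ≤ L * √p + (‖gradf (Escaled m p)‖ + 2 * Lf * √p) :=
          add_le_add (mul_le_mul_of_nonneg_left hVP hL0) (norm_gradf_le gradf hm hLf hlip hV)
      _ = (L + 2 * Lf) * √p + ‖gradf (Escaled m p)‖ := by ring
  rw [frobSq_eq_norm_sq]
  refine pow_le_pow_left₀ (norm_nonneg _) ?_ 2
  rw [le_div_iff₀ (by positivity)]
  nlinarith [norm_nonneg (Gmap gradf ρ L V u - V * vecMulVec u u)]

end Perturbation

lemma div_two_mul_lt_half_of_div_lt {a ϖ μ c0 ρ : ℝ} (ha : 0 < a) (hϖ : 0 ≤ ϖ) (hμ : 0 < μ)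
    (hc0 : c0 ∈ Set.Ioo (0 : ℝ) 1) (h : (a + ϖ) / (μ * c0) < ρ) :
    0 < ρ ∧ ϖ / (2 * ρ) < μ / 2 := by
  obtain ⟨hc0, hc1⟩ := hc0
  rw [div_lt_iff₀ (by positivity)] at h
  have hρ : 0 < ρ := by nlinarith [mul_pos hμ hc0]
  refine ⟨hρ, ?_⟩
  rw [div_lt_div_iff₀ (by positivity) two_pos]
  nlinarith [mul_pos hρ hμ]

lemma div_two_mul_le_div_eight_of_div_lt {p : ℕ} (hp : 0 < p) {L Lf g ε ρ : ℝ} (hL : 0 ≤ L)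
    (hε : 0 < ε) (hρ : 0 < ρ) (h : 2 * (4 * Lf * p + 2 * √p * g + 5 / 2 * L * p) / ε < ρ) :
    ((L + 2 * Lf) * √p + g) / (2 * ρ) ≤ ε / 8 := by
  set ϖ := (L + 2 * Lf) * √p + g
  have hlin : 4 * Lf * p + 2 * √p * g + 5 / 2 * L * p = 2 * √p * ϖ + L * p / 2 := by
    have hsp : √(p : ℝ) * √p = p := Real.mul_self_sqrt (Nat.cast_nonneg p)
    linear_combination (-(2 * L) - 4 * Lf) * hsp
  have hp1 : 1 ≤ √(p : ℝ) := Real.one_le_sqrt.2 (by exact_mod_cast hp)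
  rw [hlin, div_lt_iff₀ hε] at h
  rw [div_le_div_iff₀ (by positivity) (by norm_num)]
  rcases le_total 0 ϖ with hϖ | hϖ
  · nlinarith [mul_le_mul_of_nonneg_right hp1 hϖ, mul_nonneg hL (Nat.cast_nonneg p)]
  · nlinarith

lemma two_mul_sqrt_add_two_mul_sqrt_pos {p : ℕ} (hp : 0 < p) {c0 : ℝ}
    (hc0 : c0 ∈ Set.Ioo (0 : ℝ) 1) :
    0 < 2 * (1 - 1 / (p : ℝ)) * √((p : ℝ) - c0 ^ 2) + 2 * √(1 - c0 ^ 2) := by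
  have h1 : 0 ≤ 1 - 1 / (p : ℝ) :=
    sub_nonneg.2 (div_le_one_of_le₀ (by exact_mod_cast hp) (Nat.cast_nonneg p))
  have h2 : 0 < √(1 - c0 ^ 2) := Real.sqrt_pos.2 (by nlinarith [hc0.1, hc0.2])
  have h3 := mul_nonneg h1 (Real.sqrt_nonneg ((p : ℝ) - c0 ^ 2))
  linarith

lemma ciInf_abs_pos {ι : Type*} [Finite ι] [Nonempty ι] {x : ι → ℝ} (hx : ∀ i, x i ≠ 0) :
    0 < ⨅ i, |x i| := by
  obtain ⟨i, hi⟩ := exists_eq_ciInf_of_finite (f := fun i => |x i|)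
  exact hi ▸ abs_pos.2 (hx i)

theorem dcra_finite_small_gap_general (m p : ℕ) (hm : 0 < m) (hp : 0 < p)
    (gradf : Matrix (Fin m) (Fin p) ℝ → Matrix (Fin m) (Fin p) ℝ)
    (Lf : ℝ) (hLf : 0 < Lf)
    (hlip : ∀ W W' : Matrix (Fin m) (Fin p) ℝ,
      frobNorm (gradf W - gradf W') ≤ Lf * frobNorm (W - W'))
    (ρ L : ℝ) (hL : Lf ≤ L)
    (c0 ε : ℝ) (hc0 : c0 ∈ Set.Ioo (0 : ℝ) 1) (hε : ε ∈ Set.Ioc 0 (c0 ^ 2))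
    (ϖ ϖlin η ρhat : ℝ)
    (hϖ : ϖ = (L + 2 * Lf) * Real.sqrt p + frobNorm (gradf (Escaled m p)))
    (hϖlin : ϖlin = 4 * Lf * (p : ℝ) + 2 * Real.sqrt p * frobNorm (gradf (Escaled m p))
      + (5 / 2) * L * (p : ℝ))
    (hη : η = 2 * (1 - 1 / (p : ℝ)) * Real.sqrt ((p : ℝ) - c0 ^ 2)
      + 2 * Real.sqrt (1 - c0 ^ 2))
    (hρhat : ρhat = max (2 * ϖlin / η) (2 * ϖlin / ε))
    (Vseq : ℕ → Matrix (Fin m) (Fin p) ℝ) (useq : ℕ → Fin p → ℝ) (lamseq : ℕ → ℝ)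
    (hV0 : unitCols (Vseq 0))
    (htop : ∀ l, isTopEigen (Vseq l) (lamseq l) (useq l))
    (hzero : ∀ j, useq 0 j ≠ 0)
    (μ ρbar : ℝ) (hμ : μ = ⨅ j, |useq 0 j|) (hρbar : ρbar = (L * p + ϖ) / (μ * c0))
    (hρ : max ρhat ρbar < ρ)
    (hcol : ∀ l j, ∃ i, Gmap gradf ρ L (Vseq l) (useq l) i j ≠ 0)
    (hstep : ∀ l, Vseq (l + 1) = normalizeCols (Gmap gradf ρ L (Vseq l) (useq l))) :
    ∃ lbar : ℕ, 1 ≤ lbar ∧ lbar ≤ ⌈(2 * c0 ^ 2 - ε) / η⌉₊ + 1 ∧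
      ∀ l ≥ lbar, frobSq (Vseq l) - specSq (Vseq l) = (p : ℝ) - specSq (Vseq l) ∧
        (p : ℝ) - specSq (Vseq l) ≤ ε := by
  obtain ⟨hε0, hεc⟩ := hε
  have : Nonempty (Fin p) := ⟨⟨0, hp⟩⟩
  have hU := unitCols_of_eq_normalizeCols hV0 hcol hstep
  have hμ0 : 0 < μ := hμ ▸ ciInf_abs_pos hzero
  have hL0 : 0 < L := hLf.trans_le hL
  have hϖ0 : 0 ≤ ϖ := hϖ ▸ add_nonneg (by positivity) (Real.sqrt_nonneg _)
  obtain ⟨hρ0, hBμ⟩ := div_two_mul_lt_half_of_div_lt (by positivity) hϖ0 hμ0 hc0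
    (hρbar ▸ (le_max_right _ _).trans_lt hρ)
  have hBε : ϖ / (2 * ρ) ≤ ε / 8 := hϖ ▸ div_two_mul_le_div_eight_of_div_lt hp hL0.le hε0 hρ0
    (hϖlin ▸ (hρhat ▸ le_max_right _ _ : 2 * ϖlin / ε ≤ ρhat).trans_lt
      ((le_max_left _ _).trans_lt hρ))
  have hB0 : 0 ≤ ϖ / (2 * ρ) := by positivity
  have hε1 : ε ≤ 1 := hεc.trans (by nlinarith [hc0.1, hc0.2])
  have hgap := card_sub_le_of_frobSq_sub_le hp hU htop hstep
    (fun l => hϖ ▸ frobSq_Gmap_sub_le gradf hm hρ0 hLf.le hL hlip (hU l) (htop l))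
    hμ0 (fun j => hμ ▸ ciInf_le (Finite.bddBelow_range _) j) hB0 hBμ (by linarith)
  refine ⟨2, one_le_two, ?_, fun l hl => ⟨by rw [frobSq_of_unitCols (hU l)], ?_⟩⟩
  · have hnum : 0 < 2 * c0 ^ 2 - ε := by nlinarith [hc0.1]
    have := Nat.ceil_pos.2 (div_pos hnum (hη ▸ two_mul_sqrt_add_two_mul_sqrt_pos hp hc0))
    omega
  · rw [(htop l).specSq_eq]
    exact (hgap l hl).trans (by nlinarith [mul_le_mul hBε hBε hB0 (by linarith)])

/-- Proposition 2(ii), finite attainment of a small gap. Under the thresholds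
`ρ̄ = (Lp + ϖ)/(μc₀)` and `ρ̂ = max{2ϖ_lin/η, 2ϖ_lin/ε}`, if `ρ > max{ρ̂, ρ̄}` and `L ≥ L_f̃`,
the iterates of the inner solver reach, within at most `⌈(2c₀² − ε)/η⌉ + 1` steps, an index
`l̄ ≥ 1` after which `‖V^l‖_F² − ‖V^l‖² = p − ‖V^l‖² ≤ ε` for all `l ≥ l̄`. -/
theorem dcra_finite_small_gap (m p : ℕ) (hm : 0 < m) (hp : 0 < p)
    (ftilde : Matrix (Fin m) (Fin p) ℝ → ℝ)
    (gradf : Matrix (Fin m) (Fin p) ℝ → Matrix (Fin m) (Fin p) ℝ)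
    (Lf : ℝ) (hLf : 0 < Lf)
    (hderiv : ∀ W : Matrix (Fin m) (Fin p) ℝ, HasFDerivAt ftilde (frobCLM (gradf W)) W)
    (hlip : ∀ W W' : Matrix (Fin m) (Fin p) ℝ,
      frobNorm (gradf W - gradf W') ≤ Lf * frobNorm (W - W'))
    (ρ L : ℝ) (hL : Lf ≤ L)
    (c0 ε : ℝ) (hc0 : c0 ∈ Set.Ioo (0 : ℝ) 1) (hε : ε ∈ Set.Ioc 0 (c0 ^ 2))
    (ϖ ϖlin η ρhat : ℝ)
    (hϖ : ϖ = (L + 2 * Lf) * Real.sqrt p + frobNorm (gradf (Escaled m p)))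
    (hϖlin : ϖlin = 4 * Lf * (p : ℝ) + 2 * Real.sqrt p * frobNorm (gradf (Escaled m p))
      + (5 / 2) * L * (p : ℝ))
    (hη : η = 2 * (1 - 1 / (p : ℝ)) * Real.sqrt ((p : ℝ) - c0 ^ 2)
      + 2 * Real.sqrt (1 - c0 ^ 2))
    (hρhat : ρhat = max (2 * ϖlin / η) (2 * ϖlin / ε))
    (Vseq : ℕ → Matrix (Fin m) (Fin p) ℝ) (useq : ℕ → Fin p → ℝ) (lamseq : ℕ → ℝ)
    (hV0 : unitCols (Vseq 0))
    (htop : ∀ l, isTopEigen (Vseq l) (lamseq l) (useq l))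
    (hzero : ∀ j, useq 0 j ≠ 0)
    (μ ρbar : ℝ) (hμ : μ = ⨅ j, |useq 0 j|) (hρbar : ρbar = (L * p + ϖ) / (μ * c0))
    (hρ : max ρhat ρbar < ρ)
    (hcol : ∀ l j, ∃ i, Gmap gradf ρ L (Vseq l) (useq l) i j ≠ 0)
    (hstep : ∀ l, Vseq (l + 1) = normalizeCols (Gmap gradf ρ L (Vseq l) (useq l))) :
    ∃ lbar : ℕ, 1 ≤ lbar ∧ lbar ≤ ⌈(2 * c0 ^ 2 - ε) / η⌉₊ + 1 ∧
      ∀ l ≥ lbar, frobSq (Vseq l) - specSq (Vseq l) = (p : ℝ) - specSq (Vseq l) ∧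
        (p : ℝ) - specSq (Vseq l) ≤ ε :=
  dcra_finite_small_gap_general m p hm hp gradf Lf hLf hlip ρ L hL c0 ε hc0 hε ϖ ϖlin η ρhat hϖ
    hϖlin hη hρhat Vseq useq lamseq hV0 htop hzero μ ρbar hμ hρbar hρ hcol hstep

end
end

section
/- (Theorem 2, lower-bound gap of the rank-one projection.) In the setting of the objective gap bound—S the unit-column matrices in ℝ^{m×p}; f̂ Lipschitz with modulus L_f̂ on symmetric p×p matrices in the Frobenius norm; f̃(V) := f̂(VᵀV); {V^k}_{k=0}^{k̄} ⊂ S with f̃(V^{k+1}) − ρ_k‖V^{k+1}‖² ≤ f̃(V^k) − ρ_k‖V^k‖² for each k < k̄; ‖V^{k̄}‖_F² − ‖V^{k̄}‖² ≤ ε; x := ‖V^{k̄}‖·P₁ with P₁ a unit top eigenvector of (V^{k̄})ᵀV^{k̄}—assume additionally that the penalty parameters are nondecreasing (ρ_{j+1} ≥ ρ_j for all j), that L_f̂ ≥ ρ_{k̄}, and that f̃(V^{k*}) ≤ υ* for some k* ∈ {0,…,k̄−1} and real number υ*. Then, with r* := rank(V^{k*}), f̂(x xᵀ) − υ* ≤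 ρ_{k̄}(p − 1) + ρ_{k*}(1 − p/r*) + (L_f̂ − ρ_{k̄})·ε. -/
/-!
At the last iterate `V = V^{k̄}` we have `x xᵀ = ‖V‖² P₁ P₁ᵀ`, and deflating the positive
semidefinite `VᵀV` along its top eigenvector leaves a positive semidefinite matrix of trace
`‖V‖_F² - ‖V‖²`. A positive semidefinite matrix has Frobenius norm at most its trace, so the
Lipschitz bound gives `f̂(x xᵀ) ≤ f̃(V) + L (p - ‖V‖²)`. Since `‖V^k‖² ≥ 1` on `S` and `ρ` is
nondecreasing, `f̃(V^k) - ρ_k (‖V^k‖² - 1)` does not increase along the iterates, which links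
`V^{k̄}` to `V^{k*}`; finally `‖V^{k*}‖² ≥ ‖V^{k*}‖_F² / r* = p / r*`.
-/

open Matrix

noncomputable section

section SpectralNorm

variable {a b : ℕ}

lemma dotProduct_transpose_mul_self_mulVec (V : Matrix (Fin a) (Fin b) ℝ) (x : Fin b → ℝ) :
    x ⬝ᵥ ((Vᵀ * V) *ᵥ x) = ∑ i, (∑ j, V i j * x j) ^ 2 := by
  rw [← mulVec_mulVec, dotProduct_mulVec, vecMul_transpose]
  simp [dotProduct, mulVec, sq]

lemma specSq_nonneg (V : Matrix (Fin a) (Fin b) ℝ) : 0 ≤ specSq V :=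
  Real.sSup_nonneg fun _ ⟨_, _, hc⟩ => hc ▸ Finset.sum_nonneg fun _ _ => sq_nonneg _

lemma le_specSq (V : Matrix (Fin a) (Fin b) ℝ) {x : Fin b → ℝ} (hx : ∑ j, x j ^ 2 = 1) :
    ∑ i, (∑ j, V i j * x j) ^ 2 ≤ specSq V := by
  refine le_csSup ⟨frobSq V, ?_⟩ ⟨x, hx, rfl⟩
  rintro _ ⟨y, hy, rfl⟩
  refine Finset.sum_le_sum fun i _ => ?_
  simpa [hy] using Finset.sum_mul_sq_le_sq_mul_sq Finset.univ (V i) y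

lemma specSq_eq_of_isTopEigen {V : Matrix (Fin a) (Fin b) ℝ} {lam : ℝ} {u : Fin b → ℝ}
    (h : isTopEigen V lam u) : specSq V = lam := by
  obtain ⟨hu, hVu, hmax⟩ := h
  have unit_iff : ∀ y : Fin b → ℝ, ∑ j, y j ^ 2 = 1 ↔ y ⬝ᵥ y = 1 := by
    simp [dotProduct, sq]
  refine IsGreatest.csSup_eq ⟨⟨u, hu, ?_⟩, ?_⟩
  · rw [← dotProduct_transpose_mul_self_mulVec, hVu, dotProduct_smul, (unit_iff u).1 hu,
      smul_eq_mul, mul_one]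
  · rintro _ ⟨y, hy, rfl⟩
    simpa [← dotProduct_transpose_mul_self_mulVec, (unit_iff y).1 hy] using hmax y

lemma one_le_specSq_of_unitCols {V : Matrix (Fin a) (Fin b) ℝ} (hV : unitCols V) (j : Fin b) :
    1 ≤ specSq V := by
  have h := le_specSq V (x := Pi.single j 1) (by simp [Pi.single_apply])
  simpa [Pi.single_apply, hV j] using h

end SpectralNorm

section Frobenius

variable {a b : ℕ}

lemma frobSq_eq_of_unitCols {V : Matrix (Fin a) (Fin b) ℝ} (hV : unitCols V) : frobSq V = b := by
  rw [frobSq, Finset.sum_comm]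
  simp [show ∀ j, ∑ i, V i j ^ 2 = 1 from hV]

lemma frobSq_eq_trace_transpose_mul_self (V : Matrix (Fin a) (Fin b) ℝ) :
    frobSq V = (Vᵀ * V).trace := by
  simp [frobSq, Matrix.trace, Matrix.mul_apply, sq, Finset.sum_comm (γ := Fin a)]

lemma frobSq_neg (A : Matrix (Fin a) (Fin b) ℝ) : frobSq (-A) = frobSq A := by
  simp [frobSq]

lemma eigenvalues_transpose_mul_self_le_specSq (V : Matrix (Fin a) (Fin b) ℝ)
    (hA : (Vᵀ * V).IsHermitian) (i : Fin b) : hA.eigenvalues i ≤ specSq V := by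
  have hunit : ∑ j, (hA.eigenvectorBasis i : Fin b → ℝ) j ^ 2 = 1 := by
    have h := hA.eigenvectorBasis.orthonormal.1 i
    rw [EuclideanSpace.norm_eq, Real.sqrt_eq_one] at h
    simpa using h
  rw [hA.eigenvalues_eq]
  simpa [dotProduct_transpose_mul_self_mulVec] using le_specSq V hunit

lemma frobSq_le_rank_mul_specSq (V : Matrix (Fin a) (Fin b) ℝ) :
    frobSq V ≤ V.rank * specSq V := by
  have hA : (Vᵀ * V).IsHermitian := by simpa using isHermitian_conjTranspose_mul_self V
  have hrank : V.rank = (Finset.univ.filter fun i => hA.eigenvalues i ≠ 0).card := by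
    rw [← rank_transpose_mul_self, hA.rank_eq_card_non_zero_eigs, Fintype.card_subtype]
  rw [frobSq_eq_trace_transpose_mul_self, hA.trace_eq_sum_eigenvalues, hrank,
    ← Finset.sum_filter_ne_zero, ← nsmul_eq_mul, ← Finset.sum_const]
  exact Finset.sum_le_sum fun i _ => by
    simpa using eigenvalues_transpose_mul_self_le_specSq V hA i

lemma frobSq_div_rank_le_specSq (V : Matrix (Fin a) (Fin b) ℝ) :
    frobSq V / V.rank ≤ specSq V := by
  rcases (Nat.cast_nonneg (α := ℝ) V.rank).eq_or_lt with hr | hr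
  · simpa [← hr] using specSq_nonneg V
  · rw [div_le_iff₀ hr, mul_comm]
    exact frobSq_le_rank_mul_specSq V

end Frobenius

section PosSemidef

variable {n : ℕ} {M : Matrix (Fin n) (Fin n) ℝ}

lemma Matrix.PosSemidef.apply_sq_le (hM : M.PosSemidef) (i j : Fin n) :
    M i j ^ 2 ≤ M i i * M j j := by
  obtain ⟨m, v, rfl⟩ := posSemidef_iff_eq_sum_vecMulVec.mp hM
  simpa [Matrix.sum_apply, vecMulVec_apply, sq] using
    Finset.sum_mul_sq_le_sq_mul_sq Finset.univ (fun k => v k i) (fun k => v k j)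

lemma Matrix.PosSemidef.frobNorm_le_trace (hM : M.PosSemidef) : frobNorm M ≤ M.trace := by
  rw [frobNorm, Real.sqrt_le_left hM.trace_nonneg]
  calc frobSq M ≤ ∑ i, ∑ j, M i i * M j j :=
        Finset.sum_le_sum fun i _ => Finset.sum_le_sum fun j _ => hM.apply_sq_le i j
    _ = M.trace ^ 2 := by rw [sq, trace, Finset.sum_mul_sum]; rfl

-- The quadratic form of the deflated matrix at `x` is that of `M` at `x - (u ⬝ᵥ x) • u`.
lemma Matrix.PosSemidef.sub_smul_vecMulVec (hM : M.PosSemidef) {u : Fin n → ℝ} {lam : ℝ}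
    (hu : u ⬝ᵥ u = 1) (hMu : M *ᵥ u = lam • u) : (M - lam • vecMulVec u u).PosSemidef := by
  have hsymm : Mᵀ = M := by simpa [conjTranspose_eq_transpose_of_trivial] using hM.1.eq
  refine .of_dotProduct_mulVec_nonneg ?_ fun x => ?_
  · simp [IsHermitian, conjTranspose_eq_transpose_of_trivial, hsymm]
  · have huMx : u ⬝ᵥ (M *ᵥ x) = lam * (u ⬝ᵥ x) := by
      rw [dotProduct_mulVec, ← hsymm, vecMul_transpose, hMu, smul_dotProduct, smul_eq_mul]
    have key : x ⬝ᵥ ((M - lam • vecMulVec u u) *ᵥ x) =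
        (x - (u ⬝ᵥ x) • u) ⬝ᵥ (M *ᵥ (x - (u ⬝ᵥ x) • u)) := by
      simp only [sub_mulVec, smul_mulVec, mulVec_sub, mulVec_smul, hMu, vecMulVec_mulVec,
        op_smul_eq_smul, dotProduct_sub, sub_dotProduct, dotProduct_smul, smul_dotProduct,
        smul_eq_mul, huMx, hu]
      rw [dotProduct_comm x u]
      ring
    simpa [key] using hM.dotProduct_mulVec_nonneg (x - (u ⬝ᵥ x) • u)

end PosSemidef

lemma frobNorm_vecMulVec_sub_transpose_mul_self_le {a b : ℕ} {V : Matrix (Fin a) (Fin b) ℝ}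
    {lam : ℝ} {u : Fin b → ℝ} (htop : isTopEigen V lam u) :
    frobNorm (vecMulVec (specNorm V • u) (specNorm V • u) - Vᵀ * V) ≤ frobSq V - specSq V := by
  have hlam := specSq_eq_of_isTopEigen htop
  obtain ⟨hu, hVu, -⟩ := htop
  have huu : u ⬝ᵥ u = 1 := by simpa [dotProduct, sq] using hu
  have hxx : vecMulVec (specNorm V • u) (specNorm V • u) = lam • vecMulVec u u := by
    rw [smul_vecMulVec, vecMulVec_smul, smul_smul, specNorm,
      Real.mul_self_sqrt (specSq_nonneg V), hlam]
  have hpsd : (Vᵀ * V - lam • vecMulVec u u).PosSemidef := by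
    refine PosSemidef.sub_smul_vecMulVec ?_ huu hVu
    simpa using posSemidef_conjTranspose_mul_self V
  have htrace : (Vᵀ * V - lam • vecMulVec u u).trace = frobSq V - specSq V := by
    rw [trace_sub, trace_smul, trace_vecMulVec, huu, frobSq_eq_trace_transpose_mul_self, hlam,
      smul_eq_mul, mul_one]
  rw [hxx, ← neg_sub, frobNorm, frobSq_neg, ← frobNorm, ← htrace]
  exact hpsd.frobNorm_le_trace

lemma antitoneOn_sub_mul_sub_one {f s ρ : ℕ → ℝ} {n : ℕ} (hρ : ∀ j < n, ρ j ≤ ρ (j + 1))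
    (hs : ∀ j ≤ n, 1 ≤ s j) (hdec : ∀ j < n, f (j + 1) - ρ j * s (j + 1) ≤ f j - ρ j * s j) :
    AntitoneOn (fun j => f j - ρ j * (s j - 1)) (Set.Iic n) := by
  refine antitoneOn_of_succ_le Set.ordConnected_Iic fun j _ _ hj => ?_
  rw [Order.succ_eq_add_one] at hj ⊢
  have hj' : j < n := hj
  nlinarith [hdec j hj', mul_nonneg (sub_nonneg.2 (hρ j hj')) (sub_nonneg.2 (hs (j + 1) hj))]

theorem rank_one_projection_lower_bound_gap_general (m p : ℕ) (hp : 0 < p)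
    (fhat : Matrix (Fin p) (Fin p) ℝ → ℝ) (Lfhat : ℝ)
    (hlip : ∀ X Y : Matrix (Fin p) (Fin p) ℝ, X.IsSymm → Y.IsSymm →
      |fhat X - fhat Y| ≤ Lfhat * frobNorm (X - Y))
    (kbar : ℕ) (ρ : ℕ → ℝ) (hρ : ∀ k ≤ kbar, 0 < ρ k)
    (hmono : ∀ j < kbar, ρ j ≤ ρ (j + 1))
    (Vseq : ℕ → Matrix (Fin m) (Fin p) ℝ) (hS : ∀ k ≤ kbar, unitCols (Vseq k))
    (hdec : ∀ k < kbar,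
      fhat ((Vseq (k + 1))ᵀ * Vseq (k + 1)) - ρ k * specSq (Vseq (k + 1)) ≤
        fhat ((Vseq k)ᵀ * Vseq k) - ρ k * specSq (Vseq k))
    (ε : ℝ) (hgap : frobSq (Vseq kbar) - specSq (Vseq kbar) ≤ ε)
    (lam : ℝ) (P1 : Fin p → ℝ) (htop : isTopEigen (Vseq kbar) lam P1)
    (x : Fin p → ℝ) (hx : x = specNorm (Vseq kbar) • P1)
    (hLρ : ρ kbar ≤ Lfhat)
    (kstar : ℕ) (hkstar : kstar < kbar) (υstar : ℝ)
    (hval : fhat ((Vseq kstar)ᵀ * Vseq kstar) ≤ υstar) :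
    fhat (vecMulVec x x) - υstar ≤
      ρ kbar * ((p : ℝ) - 1) + ρ kstar * (1 - (p : ℝ) / ((Vseq kstar).rank : ℝ))
        + (Lfhat - ρ kbar) * ε := by
  have happrox : fhat (vecMulVec x x) ≤
      fhat ((Vseq kbar)ᵀ * Vseq kbar) + Lfhat * (frobSq (Vseq kbar) - specSq (Vseq kbar)) := by
    have hlipx := hlip _ _ (transpose_vecMulVec x x) (transpose_mul (Vseq kbar)ᵀ (Vseq kbar))
    subst hx
    linarith [(abs_le.1 hlipx).2, mul_le_mul_of_nonneg_left
      (frobNorm_vecMulVec_sub_transpose_mul_self_le htop) ((hρ kbar le_rfl).le.trans hLρ)]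
  have hdescent := antitoneOn_sub_mul_sub_one (f := fun k => fhat ((Vseq k)ᵀ * Vseq k))
    (s := fun k => specSq (Vseq k)) hmono
    (fun k hk => one_le_specSq_of_unitCols (hS k hk) ⟨0, hp⟩) hdec
    hkstar.le Set.self_mem_Iic hkstar.le
  have hrank := frobSq_div_rank_le_specSq (Vseq kstar)
  rw [frobSq_eq_of_unitCols (hS kstar hkstar.le)] at hrank
  rw [frobSq_eq_of_unitCols (hS kbar le_rfl)] at happrox hgap
  linarith [mul_le_mul_of_nonneg_left hrank (hρ kstar hkstar.le).le,
    mul_le_mul_of_nonneg_left hgap (sub_nonneg.2 hLρ)]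

/-- Theorem 2, lower-bound gap of the rank-one projection. In the setting of
the objective gap bound, if moreover the penalty parameters are nondecreasing, `L_f̂ ≥ ρ_k̄`, and
`f̃(V^{k*}) ≤ υ*`, then `f̂(xxᵀ) − υ* ≤ ρ_k̄(p−1) + ρ_{k*}(1 − p/r*) + (L_f̂ − ρ_k̄)ε`. -/
theorem rank_one_projection_lower_bound_gap (m p : ℕ) (hp : 0 < p)
    (fhat : Matrix (Fin p) (Fin p) ℝ → ℝ) (Lfhat : ℝ) (hLfhat : 0 < Lfhat)
    (hlip : ∀ X Y : Matrix (Fin p) (Fin p) ℝ, X.IsSymm → Y.IsSymm →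
      |fhat X - fhat Y| ≤ Lfhat * frobNorm (X - Y))
    (kbar : ℕ) (hkbar : 1 ≤ kbar) (ρ : ℕ → ℝ) (hρ : ∀ k ≤ kbar, 0 < ρ k)
    (hmono : ∀ j < kbar, ρ j ≤ ρ (j + 1))
    (Vseq : ℕ → Matrix (Fin m) (Fin p) ℝ) (hS : ∀ k ≤ kbar, unitCols (Vseq k))
    (hdec : ∀ k < kbar,
      fhat ((Vseq (k + 1))ᵀ * Vseq (k + 1)) - ρ k * specSq (Vseq (k + 1)) ≤
        fhat ((Vseq k)ᵀ * Vseq k) - ρ k * specSq (Vseq k))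
    (ε : ℝ) (hε : 0 < ε) (hgap : frobSq (Vseq kbar) - specSq (Vseq kbar) ≤ ε)
    (lam : ℝ) (P1 : Fin p → ℝ) (htop : isTopEigen (Vseq kbar) lam P1)
    (x : Fin p → ℝ) (hx : x = specNorm (Vseq kbar) • P1)
    (hLρ : ρ kbar ≤ Lfhat)
    (kstar : ℕ) (hkstar : kstar < kbar) (υstar : ℝ)
    (hval : fhat ((Vseq kstar)ᵀ * Vseq kstar) ≤ υstar) :
    fhat (vecMulVec x x) - υstar ≤
      ρ kbar * ((p : ℝ) - 1) + ρ kstar * (1 - (p : ℝ) / ((Vseq kstar).rank : ℝ))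
        + (Lfhat - ρ kbar) * ε :=
  rank_one_projection_lower_bound_gap_general m p hp fhat Lfhat hlip kbar ρ hρ hmono Vseq hS hdec ε
    hgap lam P1 htop x hx hLρ kstar hkstar υstar hval

end
end
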